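/- Let L be a commutative unital quantale. An L-ordered set (P, e) is a continuous L-dcpo if and only if there exists an interpolative generalized L-closure space (X, ⟨·⟩) such that (𝔠(X), sub) is L-order-isomorphic to (P, e). -/
import Mathlib


universe u

/-- A commutative unital quantale structure on a complete lattice `L`. -/
structure CommQuantale (L : Type u) [CompleteLattice L] : Type u where
  mul : L → L → L
  mul_comm : ∀ a b, mul a b = mul b a
  mul_assoc : ∀ a b c, mul (mul a b) c = mul a (mul b c)
  unit : L
  mul_unit : ∀ a, mul a unit = a
  mul_sSup : ∀ (a : L) (S : Set L), mul a (sSup S) = ⨆ s ∈ S, mul a s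

namespace CommQuantale

variable {L : Type u} [CompleteLattice L]

/-- The residuation `b → c`, the right adjoint of `⊗`. -/
def res (Q : CommQuantale L) (b c : L) : L := sSup {a | Q.mul a b ≤ c}

/-- `sub(A,B) = ⋀ₓ (A x → B x)` for `L`-subsets. -/
def subL (Q : CommQuantale L) {X : Type u} (A B : X → L) : L :=
  ⨅ x, Q.res (A x) (B x)

open Classical in
/-- The characteristic function `u_x`. -/
noncomputable def ux (Q : CommQuantale L) {X : Type u} (x : X) : X → L :=
  fun y => if y = x then Q.unit else ⊥

/-- `e` is an `L`-order on `P`. -/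
def IsLOrder (Q : CommQuantale L) {P : Type u} (e : P → P → L) : Prop :=
  (∀ x, Q.unit ≤ e x x) ∧
  (∀ x y z, Q.mul (e x y) (e y z) ≤ e x z) ∧
  (∀ x y, Q.unit ≤ e x y → Q.unit ≤ e y x → x = y)

/-- `D` is a directed `L`-subset of `(P, e)`. -/
def IsDirectedL (Q : CommQuantale L) {P : Type u} (e : P → P → L) (D : P → L) : Prop :=
  (Q.unit ≤ ⨆ x, D x) ∧
  (∀ x y, Q.mul (D x) (D y) ≤ ⨆ z, Q.mul (Q.mul (D z) (e x z)) (e y z))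

/-- `x₀` is the supremum `⊔A` of the `L`-subset `A`. -/
def IsSupL (Q : CommQuantale L) {P : Type u} (e : P → P → L) (A : P → L) (x₀ : P) : Prop :=
  ∀ y, e x₀ y = Q.subL A (fun x => e x y)

/-- `(P, e)` is an `L`-dcpo: every directed `L`-subset has a supremum. -/
def IsDcpoL (Q : CommQuantale L) {P : Type u} (e : P → P → L) : Prop :=
  ∀ D : P → L, Q.IsDirectedL e D → ∃ s, Q.IsSupL e D s

/-- `⇓x : P → L`, i.e. `⇓x(y) = ⋀_{D directed} (e(x, ⊔D) → ⋁_d D(d) ⊗ e(y,d))`. -/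
def wayBelow (Q : CommQuantale L) {P : Type u} (e : P → P → L) (x : P) : P → L := fun y =>
  ⨅ (D : P → L) (_ : Q.IsDirectedL e D) (s : P) (_ : Q.IsSupL e D s),
    Q.res (e x s) (⨆ d, Q.mul (D d) (e y d))

/-- `(P, e)` is a continuous `L`-dcpo. -/
def IsContinuousLDcpo (Q : CommQuantale L) {P : Type u} (e : P → P → L) : Prop :=
  Q.IsLOrder e ∧ Q.IsDcpoL e ∧
  ∀ x, Q.IsDirectedL e (Q.wayBelow e x) ∧ Q.IsSupL e (Q.wayBelow e x) x

open Classical in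
/-- `k(x)(y) = e(y,x)` if `y` is compact (i.e. `u ≤ ⇓y(y)`), else `0`. -/
noncomputable def kfun (Q : CommQuantale L) {P : Type u} (e : P → P → L) (x : P) : P → L :=
  fun y => if Q.unit ≤ Q.wayBelow e y y then e y x else ⊥

/-- `(P, e)` is an algebraic `L`-dcpo. -/
noncomputable def IsAlgebraicLDcpo (Q : CommQuantale L) {P : Type u} (e : P → P → L) : Prop :=
  Q.IsLOrder e ∧ Q.IsDcpoL e ∧
  ∀ x, Q.IsDirectedL e (Q.kfun e x) ∧ Q.IsSupL e (Q.kfun e x) x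

/-- `cl` is a generalized `L`-closure operator: (GC1) and (GC2). -/
def IsGenClosure (Q : CommQuantale L) {X : Type u} (cl : (X → L) → (X → L)) : Prop :=
  (∀ A B, Q.subL A B ≤ Q.subL (cl A) (cl B)) ∧
  (∀ A, cl (cl A) ≤ cl A)

/-- Interpolation conditions (IT1)-(IT3). -/
noncomputable def IsInterpolative (Q : CommQuantale L) {X : Type u}
    (cl : (X → L) → (X → L)) : Prop :=
  (∀ x, Q.unit ≤ ⨆ t, cl (Q.ux x) t) ∧
  (∀ x y, cl (Q.ux x) y ≤ ⨆ t, Q.mul (cl (Q.ux x) t) (cl (Q.ux t) y)) ∧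
  (∀ x a b, Q.mul (cl (Q.ux x) a) (cl (Q.ux x) b) ≤
    ⨆ t, Q.mul (Q.mul (cl (Q.ux x) t) (cl (Q.ux t) a)) (cl (Q.ux t) b))

/-- `U` is a directed closed set: (DC1)-(DC4). -/
noncomputable def IsDirClosed (Q : CommQuantale L) {X : Type u}
    (cl : (X → L) → (X → L)) (U : X → L) : Prop :=
  (Q.unit ≤ ⨆ x, U x) ∧
  (∀ x, U x ≤ Q.subL (cl (Q.ux x)) U) ∧
  (∀ x, U x ≤ ⨆ y, Q.mul (U y) (cl (Q.ux y) x)) ∧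
  (∀ x y, Q.mul (U x) (U y) ≤
    ⨆ z, Q.mul (Q.mul (U z) (cl (Q.ux z) x)) (cl (Q.ux z) y))

end CommQuantale

namespace CommQuantale

variable {L : Type u} [CompleteLattice L] (Q : CommQuantale L)

lemma unit_mul (a : L) : Q.mul Q.unit a = a := by rw [Q.mul_comm]; exact Q.mul_unit a

lemma mul_iSup {ι : Sort*} (a : L) (g : ι → L) :
    Q.mul a (⨆ i, g i) = ⨆ i, Q.mul a (g i) := by
  rw [show (⨆ i, g i) = sSup (Set.range g) from rfl, Q.mul_sSup, iSup_range]

lemma iSup_mul {ι : Sort*} (a : L) (g : ι → L) :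
    Q.mul (⨆ i, g i) a = ⨆ i, Q.mul (g i) a := by
  rw [Q.mul_comm, Q.mul_iSup]; exact iSup_congr fun i => Q.mul_comm a (g i)

lemma mul_le_mul {a b c d : L} (h1 : a ≤ c) (h2 : b ≤ d) : Q.mul a b ≤ Q.mul c d := by
  have hr : Q.mul c b ≤ Q.mul c d := by
    have h := Q.mul_sSup c ({b, d} : Set L)
    have hd : sSup ({b, d} : Set L) = d := by
      rw [sSup_insert, sSup_singleton, sup_eq_right.mpr h2]
    rw [hd] at h
    rw [h]
    exact le_iSup₂ (f := fun s (_ : s ∈ ({b,d} : Set L)) => Q.mul c s) b (by simp)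
  have hl : Q.mul a b ≤ Q.mul c b := by
    rw [Q.mul_comm a b, Q.mul_comm c b]
    have h := Q.mul_sSup b ({a, c} : Set L)
    have hc : sSup ({a, c} : Set L) = c := by
      rw [sSup_insert, sSup_singleton, sup_eq_right.mpr h1]
    rw [hc] at h
    rw [h]
    exact le_iSup₂ (f := fun s (_ : s ∈ ({a,c} : Set L)) => Q.mul b s) a (by simp)
  exact hl.trans hr

lemma mul_bot (a : L) : Q.mul a ⊥ = ⊥ := by
  have h := Q.mul_sSup a (∅ : Set L)
  simpa using h

lemma mul3_comm_right (a b c : L) : Q.mul (Q.mul a b) c = Q.mul (Q.mul a c) b := by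
  rw [Q.mul_assoc, Q.mul_comm b c, ← Q.mul_assoc]

lemma mul3_comm_left (a b c : L) : Q.mul (Q.mul a b) c = Q.mul (Q.mul c b) a := by
  rw [Q.mul_comm a b, Q.mul_assoc, Q.mul_comm a c, ← Q.mul_assoc, Q.mul_comm b c]

lemma le_res {a b c : L} (h : Q.mul a b ≤ c) : a ≤ Q.res b c := le_sSup h

lemma res_mul_le (b c : L) : Q.mul (Q.res b c) b ≤ c := by
  rw [Q.mul_comm, res, Q.mul_sSup]
  exact iSup₂_le fun a ha => by rw [Q.mul_comm]; exact ha

lemma mul_le_of_le_res {a b c : L} (h : a ≤ Q.res b c) : Q.mul a b ≤ c :=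
  (Q.mul_le_mul h le_rfl).trans (Q.res_mul_le b c)

lemma res_le_res_right {c c' : L} (b : L) (h : c ≤ c') : Q.res b c ≤ Q.res b c' :=
  Q.le_res ((Q.res_mul_le b c).trans h)

lemma res_le_res_left {b b' : L} (c : L) (h : b' ≤ b) : Q.res b c ≤ Q.res b' c :=
  Q.le_res ((Q.mul_le_mul le_rfl h).trans (Q.res_mul_le b c))

lemma res_unit (c : L) : Q.res Q.unit c = c := by
  apply le_antisymm
  · have h := Q.res_mul_le Q.unit c; rwa [Q.mul_unit] at h
  · exact Q.le_res (by rw [Q.mul_unit])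

lemma res_bot (c : L) : Q.res ⊥ c = ⊤ :=
  le_antisymm le_top (Q.le_res (by rw [Q.mul_bot]; exact bot_le))

lemma res_le_of_unit_le {b : L} (c : L) (h : Q.unit ≤ b) : Q.res b c ≤ c :=
  (Q.res_le_res_left c h).trans (Q.res_unit c).le

lemma le_mul_right {b : L} (a : L) (h : Q.unit ≤ b) : a ≤ Q.mul a b := by
  conv_lhs => rw [← Q.mul_unit a]
  exact Q.mul_le_mul le_rfl h

lemma le_mul_left {a : L} (b : L) (h : Q.unit ≤ a) : b ≤ Q.mul a b := by
  rw [Q.mul_comm]; exact Q.le_mul_right b h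

section subLlemmas

variable {X : Type u}

lemma subL_le_res (A B : X → L) (x : X) : Q.subL A B ≤ Q.res (A x) (B x) := iInf_le _ x

lemma subL_mul_le (A B : X → L) (x : X) : Q.mul (Q.subL A B) (A x) ≤ B x :=
  Q.mul_le_of_le_res (Q.subL_le_res A B x)

lemma le_subL {A B : X → L} {k : L} (h : ∀ x, Q.mul k (A x) ≤ B x) : k ≤ Q.subL A B :=
  le_iInf fun x => Q.le_res (h x)

lemma subL_ux (x : X) (U : X → L) : Q.subL (Q.ux x) U = U x := by
  apply le_antisymm
  · refine (Q.subL_le_res _ _ x).trans ?_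
    simp only [ux, if_pos rfl]
    exact (Q.res_unit (U x)).le
  · apply le_iInf
    intro y
    by_cases h : y = x
    · subst h; simp only [ux, if_pos rfl]; exact (Q.res_unit (U y)).ge
    · simp only [ux, if_neg h, Q.res_bot]; exact le_top

lemma unit_le_subL_refl (A : X → L) : Q.unit ≤ Q.subL A A :=
  Q.le_subL fun x => by rw [Q.unit_mul]

lemma subL_trans (A B C : X → L) : Q.mul (Q.subL A B) (Q.subL B C) ≤ Q.subL A C :=
  Q.le_subL fun x => by
    rw [Q.mul3_comm_right]
    calc Q.mul (Q.mul (Q.subL A B) (A x)) (Q.subL B C)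
        ≤ Q.mul (B x) (Q.subL B C) := Q.mul_le_mul (Q.subL_mul_le A B x) le_rfl
      _ = Q.mul (Q.subL B C) (B x) := Q.mul_comm _ _
      _ ≤ C x := Q.subL_mul_le B C x

lemma subL_mono_right {B B' : X → L} (A : X → L) (h : ∀ x, B x ≤ B' x) :
    Q.subL A B ≤ Q.subL A B' :=
  le_iInf fun x => (Q.subL_le_res A B x).trans (Q.res_le_res_right _ (h x))

lemma subL_mono_left {A A' : X → L} (B : X → L) (h : ∀ x, A' x ≤ A x) :
    Q.subL A B ≤ Q.subL A' B :=
  le_iInf fun x => (Q.subL_le_res A B x).trans (Q.res_le_res_left _ (h x))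

end subLlemmas

end CommQuantale


namespace CommQuantale

variable {L : Type u} [CompleteLattice L] (Q : CommQuantale L)
variable {P : Type u} {e : P → P → L}

section OrderLemmas

variable (he : Q.IsLOrder e)
include he

/-- the down set of `x` is directed -/
lemma down_directed (x : P) : Q.IsDirectedL e (fun z => e z x) := by
  obtain ⟨hrefl, htrans, _⟩ := he
  constructor
  · exact (hrefl x).trans (le_iSup (fun z => e z x) x)
  · intro a b
    refine le_trans ?_ (le_iSup _ x)
    calc Q.mul (e a x) (e b x)
        ≤ Q.mul (Q.mul Q.unit (e a x)) (e b x) := by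
          rw [Q.unit_mul]
      _ ≤ Q.mul (Q.mul (e x x) (e a x)) (e b x) :=
          Q.mul_le_mul (Q.mul_le_mul (hrefl x) le_rfl) le_rfl

/-- `x` is the supremum of its down set -/
lemma down_sup (x : P) : Q.IsSupL e (fun z => e z x) x := by
  obtain ⟨hrefl, htrans, _⟩ := he
  intro y
  apply le_antisymm
  · exact Q.le_subL fun z => by rw [Q.mul_comm]; exact htrans z x y
  · exact (Q.subL_le_res _ _ x).trans (Q.res_le_of_unit_le _ (hrefl x))

lemma unit_le_of_isSup {D : P → L} {s : P} (hs : Q.IsSupL e D s) (t : P) :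
    Q.unit ≤ Q.res (D t) (e t s) := by
  have h := (hs s).symm.le
  have h2 : Q.unit ≤ Q.subL D (fun z => e z s) := (he.1 s).trans (by rw [hs s])
  exact h2.trans (Q.subL_le_res _ _ t)

/-- elements of D are below the sup -/
lemma le_e_sup {D : P → L} {s : P} (hs : Q.IsSupL e D s) (t : P) : D t ≤ e t s := by
  calc D t = Q.mul Q.unit (D t) := (Q.unit_mul _).symm
    _ ≤ Q.mul (Q.res (D t) (e t s)) (D t) :=
        Q.mul_le_mul (Q.unit_le_of_isSup he hs t) le_rfl
    _ ≤ e t s := Q.res_mul_le _ _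

lemma sup_unique {D : P → L} {s s' : P} (hs : Q.IsSupL e D s) (hs' : Q.IsSupL e D s') :
    s = s' := by
  obtain ⟨hrefl, _, hanti⟩ := he
  apply hanti
  · rw [hs s', ← hs' s']; exact hrefl s'
  · rw [hs' s, ← hs s]; exact hrefl s

end OrderLemmas

lemma wayBelow_le {D : P → L} {s : P} (hD : Q.IsDirectedL e D) (hs : Q.IsSupL e D s)
    (x y : P) :
    Q.wayBelow e x y ≤ Q.res (e x s) (⨆ d, Q.mul (D d) (e y d)) := by
  refine le_trans (iInf_le _ D) ?_
  refine le_trans (iInf_le _ hD) ?_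
  exact le_trans (iInf_le _ s) (iInf_le _ hs)

lemma wayBelow_mul_le {D : P → L} {s : P} (hD : Q.IsDirectedL e D) (hs : Q.IsSupL e D s)
    (x y : P) :
    Q.mul (Q.wayBelow e x y) (e x s) ≤ ⨆ d, Q.mul (D d) (e y d) :=
  (Q.mul_le_mul (Q.wayBelow_le hD hs x y) le_rfl).trans (Q.res_mul_le _ _)

lemma le_wayBelow {k : L} {x y : P}
    (h : ∀ (D : P → L), Q.IsDirectedL e D → ∀ (s : P), Q.IsSupL e D s →
      Q.mul k (e x s) ≤ ⨆ d, Q.mul (D d) (e y d)) :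
    k ≤ Q.wayBelow e x y :=
  le_iInf fun D => le_iInf fun hD => le_iInf fun s => le_iInf fun hs => Q.le_res (h D hD s hs)

section OrderLemmas2

variable (he : Q.IsLOrder e)
include he

/-- (F2) `⇓x(y) ≤ e(y,x)` -/
lemma wayBelow_le_e (x y : P) : Q.wayBelow e x y ≤ e y x := by
  have h := Q.wayBelow_mul_le (Q.down_directed he x) (Q.down_sup he x) x y
  have h1 : Q.wayBelow e x y ≤ Q.mul (Q.wayBelow e x y) (e x x) :=
    Q.le_mul_right _ (he.1 x)
  refine h1.trans (h.trans (iSup_le fun d => ?_))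
  rw [Q.mul_comm]; exact he.2.1 y d x

/-- (F3) `⇓x` is a lower set: `⇓x(y) ⊗ e(z,y) ≤ ⇓x(z)` -/
lemma wayBelow_lower (x y z : P) :
    Q.mul (Q.wayBelow e x y) (e z y) ≤ Q.wayBelow e x z := by
  apply Q.le_wayBelow
  intro D hD s hs
  have key := Q.wayBelow_mul_le hD hs x y
  calc Q.mul (Q.mul (Q.wayBelow e x y) (e z y)) (e x s)
      = Q.mul (Q.mul (Q.wayBelow e x y) (e x s)) (e z y) := Q.mul3_comm_right _ _ _
    _ ≤ Q.mul (⨆ d, Q.mul (D d) (e y d)) (e z y) := Q.mul_le_mul key le_rfl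
    _ = ⨆ d, Q.mul (Q.mul (D d) (e y d)) (e z y) := Q.iSup_mul _ _
    _ ≤ ⨆ d, Q.mul (D d) (e z d) := by
        refine iSup_mono fun d => ?_
        rw [Q.mul_assoc]
        refine Q.mul_le_mul le_rfl ?_
        rw [Q.mul_comm]; exact he.2.1 z y d

/-- (F4) `⇓` is monotone in the index: `⇓x(y) ⊗ e(x,x') ≤ ⇓x'(y)` -/
lemma wayBelow_mono (x x' y : P) :
    Q.mul (Q.wayBelow e x y) (e x x') ≤ Q.wayBelow e x' y := by
  apply Q.le_wayBelow
  intro D hD s hs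
  have key := Q.wayBelow_mul_le hD hs x y
  calc Q.mul (Q.mul (Q.wayBelow e x y) (e x x')) (e x' s)
      = Q.mul (Q.wayBelow e x y) (Q.mul (e x x') (e x' s)) := Q.mul_assoc _ _ _
    _ ≤ Q.mul (Q.wayBelow e x y) (e x s) := Q.mul_le_mul le_rfl (he.2.1 x x' s)
    _ ≤ _ := key

/-- (F5) transitivity through `⇓` -/
lemma wayBelow_trans (x y z : P) :
    Q.mul (Q.wayBelow e x z) (Q.wayBelow e z y) ≤ Q.wayBelow e x y := by
  calc Q.mul (Q.wayBelow e x z) (Q.wayBelow e z y)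
      = Q.mul (Q.wayBelow e z y) (Q.wayBelow e x z) := Q.mul_comm _ _
    _ ≤ Q.mul (Q.wayBelow e z y) (e z x) := Q.mul_le_mul le_rfl (Q.wayBelow_le_e he x z)
    _ ≤ Q.wayBelow e x y := Q.wayBelow_mono he z x y

end OrderLemmas2

end CommQuantale


namespace CommQuantale

variable {L : Type u} [CompleteLattice L] (Q : CommQuantale L)

lemma mul_left_comm (a b c : L) : Q.mul a (Q.mul b c) = Q.mul b (Q.mul a c) := by
  rw [← Q.mul_assoc, Q.mul_comm a b, Q.mul_assoc]

lemma bot_mul (a : L) : Q.mul ⊥ a = ⊥ := by rw [Q.mul_comm, Q.mul_bot]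

lemma ux_self {X : Type u} (x : X) : Q.ux x x = Q.unit := if_pos rfl

lemma ux_ne {X : Type u} {x y : X} (h : y ≠ x) : Q.ux x y = ⊥ := if_neg h

lemma mul_iSup_iSup {ι κ : Sort*} (f : ι → L) (g : κ → L) :
    Q.mul (⨆ i, f i) (⨆ j, g j) = ⨆ i, ⨆ j, Q.mul (f i) (g j) := by
  rw [Q.iSup_mul]; exact iSup_congr fun i => Q.mul_iSup _ _

variable {P : Type u} {e : P → P → L}

section ContinuityLemmas

variable (hc : Q.IsContinuousLDcpo e)
include hc

/-- The doubled subset `E(d) = ⨆ t, ⇓x(t) ⊗ ⇓t(d)` is directed. -/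
lemma doubled_directed (x : P) :
    Q.IsDirectedL e (fun d => ⨆ t, Q.mul (Q.wayBelow e x t) (Q.wayBelow e t d)) := by
  have he := hc.1
  constructor
  · refine le_trans (hc.2.2 x).1.1 (iSup_le fun t => ?_)
    calc Q.wayBelow e x t
        ≤ Q.mul (Q.wayBelow e x t) (⨆ d, Q.wayBelow e t d) :=
          Q.le_mul_right _ (hc.2.2 t).1.1
      _ = ⨆ d, Q.mul (Q.wayBelow e x t) (Q.wayBelow e t d) := Q.mul_iSup _ _
      _ ≤ ⨆ d, ⨆ t', Q.mul (Q.wayBelow e x t') (Q.wayBelow e t' d) :=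
          iSup_mono fun d => le_iSup (fun t' => Q.mul (Q.wayBelow e x t') (Q.wayBelow e t' d)) t
  · intro a b
    rw [Q.mul_iSup_iSup]
    refine iSup_le fun s => iSup_le fun t => ?_
    calc Q.mul (Q.mul (Q.wayBelow e x s) (Q.wayBelow e s a))
            (Q.mul (Q.wayBelow e x t) (Q.wayBelow e t b))
        = Q.mul (Q.mul (Q.mul (Q.mul (Q.wayBelow e x s) (Q.wayBelow e x t))
            (Q.wayBelow e s a)) (Q.wayBelow e t b)) Q.unit := by
          rw [Q.mul_unit]
          simp only [Q.mul_assoc, Q.mul_comm, Q.mul_left_comm]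
      _ = Q.mul (Q.mul (Q.mul (Q.wayBelow e x s) (Q.wayBelow e x t))
            (Q.wayBelow e s a)) (Q.wayBelow e t b) := Q.mul_unit _
      _ ≤ Q.mul (Q.mul (⨆ r, Q.mul (Q.mul (Q.wayBelow e x r) (e s r)) (e t r))
            (Q.wayBelow e s a)) (Q.wayBelow e t b) :=
          Q.mul_le_mul (Q.mul_le_mul ((hc.2.2 x).1.2 s t) le_rfl) le_rfl
      _ = ⨆ r, Q.mul (Q.mul (Q.mul (Q.mul (Q.wayBelow e x r) (e s r)) (e t r))
            (Q.wayBelow e s a)) (Q.wayBelow e t b) := by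
          rw [Q.iSup_mul, Q.iSup_mul]
      _ ≤ ⨆ r, Q.mul (Q.wayBelow e x r)
            (Q.mul (Q.wayBelow e r a) (Q.wayBelow e r b)) := by
          refine iSup_mono fun r => ?_
          have h1 : Q.mul (Q.mul (Q.mul (Q.mul (Q.wayBelow e x r) (e s r)) (e t r))
              (Q.wayBelow e s a)) (Q.wayBelow e t b)
              = Q.mul (Q.wayBelow e x r)
                (Q.mul (Q.mul (Q.wayBelow e s a) (e s r))
                  (Q.mul (Q.wayBelow e t b) (e t r))) := by
            simp only [Q.mul_assoc, Q.mul_comm, Q.mul_left_comm]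
          rw [h1]
          exact Q.mul_le_mul le_rfl (Q.mul_le_mul (Q.wayBelow_mono he s r a)
            (Q.wayBelow_mono he t r b))
      _ ≤ ⨆ z, Q.mul (Q.mul ((fun d => ⨆ t', Q.mul (Q.wayBelow e x t') (Q.wayBelow e t' d)) z)
            (e a z)) (e b z) := by
          refine iSup_le fun r => ?_
          calc Q.mul (Q.wayBelow e x r) (Q.mul (Q.wayBelow e r a) (Q.wayBelow e r b))
              ≤ Q.mul (Q.wayBelow e x r)
                  (⨆ z, Q.mul (Q.mul (Q.wayBelow e r z) (e a z)) (e b z)) :=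
                Q.mul_le_mul le_rfl ((hc.2.2 r).1.2 a b)
            _ = ⨆ z, Q.mul (Q.wayBelow e x r)
                  (Q.mul (Q.mul (Q.wayBelow e r z) (e a z)) (e b z)) := Q.mul_iSup _ _
            _ ≤ _ := by
                refine iSup_mono fun z => ?_
                have h2 : Q.mul (Q.wayBelow e x r)
                    (Q.mul (Q.mul (Q.wayBelow e r z) (e a z)) (e b z))
                    = Q.mul (Q.mul (Q.mul (Q.wayBelow e x r) (Q.wayBelow e r z))
                      (e a z)) (e b z) := by
                  simp only [Q.mul_assoc, Q.mul_comm, Q.mul_left_comm]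
                rw [h2]
                refine Q.mul_le_mul (Q.mul_le_mul ?_ le_rfl) le_rfl
                exact le_iSup (fun t' => Q.mul (Q.wayBelow e x t') (Q.wayBelow e t' z)) r

/-- `x` is the supremum of the doubled subset. -/
lemma doubled_sup (x : P) :
    Q.IsSupL e (fun d => ⨆ t, Q.mul (Q.wayBelow e x t) (Q.wayBelow e t d)) x := by
  have he := hc.1
  intro z
  apply le_antisymm
  · refine Q.le_subL fun d => ?_
    rw [Q.mul_iSup]
    refine iSup_le fun t => ?_
    calc Q.mul (e x z) (Q.mul (Q.wayBelow e x t) (Q.wayBelow e t d))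
        ≤ Q.mul (e x z) (Q.mul (e t x) (e d t)) :=
          Q.mul_le_mul le_rfl (Q.mul_le_mul (Q.wayBelow_le_e he x t) (Q.wayBelow_le_e he t d))
      _ = Q.mul (Q.mul (e d t) (e t x)) (e x z) := by
          simp only [Q.mul_assoc, Q.mul_comm, Q.mul_left_comm]
      _ ≤ Q.mul (e d x) (e x z) := Q.mul_le_mul (he.2.1 d t x) le_rfl
      _ ≤ e d z := he.2.1 d x z
  · rw [(hc.2.2 x).2 z]
    refine le_iInf fun t => Q.le_res ?_
    show Q.mul (Q.subL (fun d => ⨆ t', Q.mul (Q.wayBelow e x t') (Q.wayBelow e t' d))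
      (fun y' => e y' z)) (Q.wayBelow e x t) ≤ e t z
    have ht : e t z = Q.subL (Q.wayBelow e t) (fun y => e y z) := (hc.2.2 t).2 z
    rw [ht]
    refine Q.le_subL fun y => ?_
    have h1 : Q.mul (Q.mul (Q.subL (fun d => ⨆ t', Q.mul (Q.wayBelow e x t') (Q.wayBelow e t' d))
        (fun y' => e y' z)) (Q.wayBelow e x t)) (Q.wayBelow e t y)
        = Q.mul (Q.subL (fun d => ⨆ t', Q.mul (Q.wayBelow e x t') (Q.wayBelow e t' d))
          (fun y' => e y' z)) (Q.mul (Q.wayBelow e x t) (Q.wayBelow e t y)) := Q.mul_assoc _ _ _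
    rw [h1]
    calc Q.mul (Q.subL (fun d => ⨆ t', Q.mul (Q.wayBelow e x t') (Q.wayBelow e t' d))
          (fun y' => e y' z)) (Q.mul (Q.wayBelow e x t) (Q.wayBelow e t y))
        ≤ Q.mul (Q.subL (fun d => ⨆ t', Q.mul (Q.wayBelow e x t') (Q.wayBelow e t' d))
          (fun y' => e y' z)) (⨆ t', Q.mul (Q.wayBelow e x t') (Q.wayBelow e t' y)) :=
          Q.mul_le_mul le_rfl (le_iSup (fun t' => Q.mul (Q.wayBelow e x t') (Q.wayBelow e t' y)) t)
      _ ≤ e y z := Q.subL_mul_le _ _ y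

/-- (F6) interpolation of the way-below relation. -/
lemma wayBelow_interp (x y : P) :
    Q.wayBelow e x y ≤ ⨆ t, Q.mul (Q.wayBelow e x t) (Q.wayBelow e t y) := by
  have he := hc.1
  calc Q.wayBelow e x y
      ≤ Q.mul (Q.wayBelow e x y) (e x x) := Q.le_mul_right _ (he.1 x)
    _ ≤ ⨆ d, Q.mul (⨆ t, Q.mul (Q.wayBelow e x t) (Q.wayBelow e t d)) (e y d) :=
        Q.wayBelow_mul_le (Q.doubled_directed hc x) (Q.doubled_sup hc x) x y
    _ ≤ ⨆ t, Q.mul (Q.wayBelow e x t) (Q.wayBelow e t y) := by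
        refine iSup_le fun d => ?_
        rw [Q.iSup_mul]
        refine iSup_le fun t => ?_
        refine le_trans (le_of_eq (Q.mul_assoc _ _ _)) ?_
        refine le_trans (Q.mul_le_mul le_rfl (Q.wayBelow_lower he t d y)) ?_
        exact le_iSup (fun t' => Q.mul (Q.wayBelow e x t') (Q.wayBelow e t' y)) t

/-- (F7) the `DC4`/`IT3` property of the way-below relation. -/
lemma wayBelow_dc4 (x a b : P) :
    Q.mul (Q.wayBelow e x a) (Q.wayBelow e x b) ≤
      ⨆ z, Q.mul (Q.mul (Q.wayBelow e x z) (Q.wayBelow e z a)) (Q.wayBelow e z b) := by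
  have he := hc.1
  calc Q.mul (Q.wayBelow e x a) (Q.wayBelow e x b)
      ≤ Q.mul (⨆ t, Q.mul (Q.wayBelow e x t) (Q.wayBelow e t a))
          (⨆ r, Q.mul (Q.wayBelow e x r) (Q.wayBelow e r b)) :=
        Q.mul_le_mul (Q.wayBelow_interp hc x a) (Q.wayBelow_interp hc x b)
    _ = ⨆ t, ⨆ r, Q.mul (Q.mul (Q.wayBelow e x t) (Q.wayBelow e t a))
          (Q.mul (Q.wayBelow e x r) (Q.wayBelow e r b)) := Q.mul_iSup_iSup _ _
    _ ≤ _ := by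
        refine iSup_le fun t => iSup_le fun r => ?_
        have h1 : Q.mul (Q.mul (Q.wayBelow e x t) (Q.wayBelow e t a))
            (Q.mul (Q.wayBelow e x r) (Q.wayBelow e r b))
            = Q.mul (Q.mul (Q.mul (Q.wayBelow e x t) (Q.wayBelow e x r))
              (Q.wayBelow e t a)) (Q.wayBelow e r b) := by
          simp only [Q.mul_assoc, Q.mul_comm, Q.mul_left_comm]
        rw [h1]
        calc Q.mul (Q.mul (Q.mul (Q.wayBelow e x t) (Q.wayBelow e x r))
              (Q.wayBelow e t a)) (Q.wayBelow e r b)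
            ≤ Q.mul (Q.mul (⨆ z, Q.mul (Q.mul (Q.wayBelow e x z) (e t z)) (e r z))
              (Q.wayBelow e t a)) (Q.wayBelow e r b) :=
              Q.mul_le_mul (Q.mul_le_mul ((hc.2.2 x).1.2 t r) le_rfl) le_rfl
          _ = ⨆ z, Q.mul (Q.mul (Q.mul (Q.mul (Q.wayBelow e x z) (e t z)) (e r z))
              (Q.wayBelow e t a)) (Q.wayBelow e r b) := by rw [Q.iSup_mul, Q.iSup_mul]
          _ ≤ _ := by
              refine iSup_mono fun z => ?_
              have h2 : Q.mul (Q.mul (Q.mul (Q.mul (Q.wayBelow e x z) (e t z)) (e r z))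
                  (Q.wayBelow e t a)) (Q.wayBelow e r b)
                  = Q.mul (Q.mul (Q.wayBelow e x z) (Q.mul (Q.wayBelow e t a) (e t z)))
                    (Q.mul (Q.wayBelow e r b) (e r z)) := by
                simp only [Q.mul_assoc, Q.mul_comm, Q.mul_left_comm]
              rw [h2]
              exact Q.mul_le_mul (Q.mul_le_mul le_rfl (Q.wayBelow_mono he t z a))
                (Q.wayBelow_mono he r z b)

end ContinuityLemmas

end CommQuantale


namespace CommQuantale

variable {L : Type u} [CompleteLattice L] (Q : CommQuantale L)
variable {P : Type u}

/-- The closure operator associated to a continuous `L`-dcpo. -/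
noncomputable def clP (e : P → P → L) : (P → L) → (P → L) :=
  fun A y => ⨆ x, Q.mul (A x) (Q.wayBelow e x y)

variable {e : P → P → L}

lemma clP_ux (x : P) : Q.clP e (Q.ux x) = Q.wayBelow e x := by
  funext y
  apply le_antisymm
  · refine iSup_le fun z => ?_
    by_cases h : z = x
    · subst h
      rw [Q.ux_self, Q.unit_mul]
    · rw [Q.ux_ne h, Q.bot_mul]
      exact bot_le
  · refine le_trans ?_ (le_iSup (fun z => Q.mul (Q.ux x z) (Q.wayBelow e z y)) x)
    rw [Q.ux_self, Q.unit_mul]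

section ForwardLemmas

variable (hc : Q.IsContinuousLDcpo e)
include hc

lemma clP_genClosure : Q.IsGenClosure (Q.clP e) := by
  have he := hc.1
  constructor
  · intro A B
    refine Q.le_subL fun y => ?_
    show Q.mul (Q.subL A B) (⨆ x, Q.mul (A x) (Q.wayBelow e x y)) ≤ _
    rw [Q.mul_iSup]
    refine iSup_le fun x => ?_
    rw [← Q.mul_assoc]
    refine le_trans (Q.mul_le_mul (Q.subL_mul_le A B x) le_rfl) ?_
    exact le_iSup (fun x' => Q.mul (B x') (Q.wayBelow e x' y)) x
  · intro A y
    show (⨆ z, Q.mul (Q.clP e A z) (Q.wayBelow e z y)) ≤ _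
    refine iSup_le fun z => ?_
    show Q.mul (⨆ x, Q.mul (A x) (Q.wayBelow e x z)) (Q.wayBelow e z y) ≤ _
    rw [Q.iSup_mul]
    refine iSup_le fun x => ?_
    rw [Q.mul_assoc]
    refine le_trans (Q.mul_le_mul le_rfl (Q.wayBelow_trans he x y z)) ?_
    exact le_iSup (fun x' => Q.mul (A x') (Q.wayBelow e x' y)) x

lemma clP_interpolative : Q.IsInterpolative (Q.clP e) := by
  refine ⟨fun x => ?_, fun x y => ?_, fun x a b => ?_⟩
  · rw [Q.clP_ux]; exact (hc.2.2 x).1.1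
  · simp only [Q.clP_ux]; exact Q.wayBelow_interp hc x y
  · simp only [Q.clP_ux]; exact Q.wayBelow_dc4 hc x a b

lemma wayBelow_dirClosed (x : P) : Q.IsDirClosed (Q.clP e) (Q.wayBelow e x) := by
  have he := hc.1
  refine ⟨(hc.2.2 x).1.1, fun y => ?_, fun y => ?_, fun a b => ?_⟩
  · rw [Q.clP_ux]
    exact Q.le_subL fun z => Q.wayBelow_trans he x z y
  · simp only [Q.clP_ux]; exact Q.wayBelow_interp hc x y
  · simp only [Q.clP_ux]; exact Q.wayBelow_dc4 hc x a b

variable {U : P → L} (hU : Q.IsDirClosed (Q.clP e) U)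
include hU

lemma dirClosed_directed : Q.IsDirectedL e U := by
  have he := hc.1
  refine ⟨hU.1, fun a b => ?_⟩
  refine le_trans (hU.2.2.2 a b) ?_
  simp only [Q.clP_ux]
  refine iSup_mono fun z => ?_
  exact Q.mul_le_mul (Q.mul_le_mul le_rfl (Q.wayBelow_le_e he z a)) (Q.wayBelow_le_e he z b)

lemma dirClosed_mul_wayBelow (t y : P) : Q.mul (U t) (Q.wayBelow e t y) ≤ U y := by
  have h := hU.2.1 t
  rw [Q.clP_ux] at h
  exact le_trans (Q.mul_le_mul h le_rfl) (Q.subL_mul_le _ _ y)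

lemma dirClosed_lower (d y : P) : Q.mul (U d) (e y d) ≤ U y := by
  have he := hc.1
  have h3 := hU.2.2.1 d
  simp only [Q.clP_ux] at h3
  calc Q.mul (U d) (e y d)
      ≤ Q.mul (⨆ t, Q.mul (U t) (Q.wayBelow e t d)) (e y d) := Q.mul_le_mul h3 le_rfl
    _ = ⨆ t, Q.mul (Q.mul (U t) (Q.wayBelow e t d)) (e y d) := Q.iSup_mul _ _
    _ ≤ ⨆ t, Q.mul (U t) (Q.wayBelow e t y) := by
        refine iSup_mono fun t => ?_
        rw [Q.mul_assoc]
        exact Q.mul_le_mul le_rfl (Q.wayBelow_lower he t d y)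
    _ ≤ U y := iSup_le fun t => Q.dirClosed_mul_wayBelow hc hU t y

variable {s : P} (hs : Q.IsSupL e U s)
include hs

lemma dirClosed_wayBelow_sup : Q.wayBelow e s = U := by
  have he := hc.1
  funext y
  apply le_antisymm
  · calc Q.wayBelow e s y
        ≤ Q.mul (Q.wayBelow e s y) (e s s) := Q.le_mul_right _ (he.1 s)
      _ ≤ ⨆ d, Q.mul (U d) (e y d) :=
          Q.wayBelow_mul_le (Q.dirClosed_directed hc hU) hs s y
      _ ≤ U y := iSup_le fun d => Q.dirClosed_lower hc hU d y
  · have h3 := hU.2.2.1 y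
    simp only [Q.clP_ux] at h3
    refine h3.trans (iSup_le fun t => ?_)
    calc Q.mul (U t) (Q.wayBelow e t y)
        ≤ Q.mul (e t s) (Q.wayBelow e t y) := Q.mul_le_mul (Q.le_e_sup he hs t) le_rfl
      _ = Q.mul (Q.wayBelow e t y) (e t s) := Q.mul_comm _ _
      _ ≤ Q.wayBelow e s y := Q.wayBelow_mono he t s y

omit hU hs in
lemma dirClosed_subL_eq {V : P → L} {sV : P} (hV : Q.IsDirClosed (Q.clP e) V)
    (hU' : Q.IsDirClosed (Q.clP e) U)
    (hs' : Q.IsSupL e U s) (hsV : Q.IsSupL e V sV) :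
    Q.subL U V = e s sV := by
  have he := hc.1
  apply le_antisymm
  · rw [hs' sV]
    exact Q.subL_mono_right U fun y => Q.le_e_sup he hsV y
  · rw [hs' sV]
    refine Q.le_subL fun y => ?_
    have h3 := hU'.2.2.1 y
    simp only [Q.clP_ux] at h3
    calc Q.mul (Q.subL U fun x => e x sV) (U y)
        ≤ Q.mul (Q.subL U fun x => e x sV) (⨆ t, Q.mul (U t) (Q.wayBelow e t y)) :=
          Q.mul_le_mul le_rfl h3
      _ = ⨆ t, Q.mul (Q.subL U fun x => e x sV) (Q.mul (U t) (Q.wayBelow e t y)) :=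
          Q.mul_iSup _ _
      _ ≤ V y := by
          refine iSup_le fun t => ?_
          rw [← Q.mul_assoc]
          calc Q.mul (Q.mul (Q.subL U fun x => e x sV) (U t)) (Q.wayBelow e t y)
              ≤ Q.mul (e t sV) (Q.wayBelow e t y) :=
                Q.mul_le_mul (Q.subL_mul_le _ _ t) le_rfl
            _ = Q.mul (Q.wayBelow e t y) (e t sV) := Q.mul_comm _ _
            _ ≤ ⨆ d, Q.mul (V d) (e y d) :=
                Q.wayBelow_mul_le (Q.dirClosed_directed hc hV) hsV t y
            _ ≤ V y := iSup_le fun d => Q.dirClosed_lower hc hV d y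

end ForwardLemmas

end CommQuantale


namespace CommQuantale

variable {L : Type u} [CompleteLattice L] (Q : CommQuantale L)
variable {X : Type u} (cl : (X → L) → (X → L))

/-- The `L`-order `sub` on the set of directed closed sets. -/
def eeC : {U : X → L // Q.IsDirClosed cl U} → {U : X → L // Q.IsDirClosed cl U} → L :=
  fun U V => Q.subL U.1 V.1

lemma eeC_order : Q.IsLOrder (Q.eeC cl) := by
  refine ⟨fun U => Q.unit_le_subL_refl U.1, fun U V W => Q.subL_trans U.1 V.1 W.1,
    fun U V h1 h2 => ?_⟩
  have key : ∀ (A B : X → L), Q.unit ≤ Q.subL A B → ∀ x, A x ≤ B x := by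
    intro A B h x
    calc A x = Q.mul Q.unit (A x) := (Q.unit_mul _).symm
      _ ≤ Q.mul (Q.subL A B) (A x) := Q.mul_le_mul h le_rfl
      _ ≤ B x := Q.subL_mul_le A B x
  exact Subtype.ext (funext fun x => le_antisymm (key U.1 V.1 h1 x) (key V.1 U.1 h2 x))

variable {cl}

/-- (DC2) in multiplication form. -/
lemma dc2_mul {V : X → L} (hV : Q.IsDirClosed cl V) (x y : X) :
    Q.mul (V x) (cl (Q.ux x) y) ≤ V y :=
  le_trans (Q.mul_le_mul (hV.2.1 x) le_rfl) (Q.subL_mul_le _ _ y)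

variable (hgc : Q.IsGenClosure cl)
include hgc

lemma ex_dirClosed (hit : Q.IsInterpolative cl) (x : X) : Q.IsDirClosed cl (cl (Q.ux x)) := by
  refine ⟨hit.1 x, fun y => ?_, hit.2.1 x, hit.2.2 x⟩
  have h1 : Q.subL (Q.ux y) (cl (Q.ux x)) ≤ Q.subL (cl (Q.ux y)) (cl (cl (Q.ux x))) :=
    hgc.1 _ _
  rw [Q.subL_ux] at h1
  exact h1.trans (Q.subL_mono_right _ fun z => hgc.2 _ z)

omit hgc

section SupC

variable {𝔇 : {U : X → L // Q.IsDirClosed cl U} → L} (h𝔇 : Q.IsDirectedL (Q.eeC cl) 𝔇)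
include h𝔇

lemma supC_dirClosed :
    Q.IsDirClosed cl (fun y => ⨆ V : {U : X → L // Q.IsDirClosed cl U}, Q.mul (𝔇 V) (V.1 y)) := by
  refine ⟨?_, fun x => ?_, fun x => ?_, fun a b => ?_⟩
  · refine le_trans h𝔇.1 (iSup_le fun V => ?_)
    calc 𝔇 V ≤ Q.mul (𝔇 V) (⨆ y, V.1 y) := Q.le_mul_right _ V.2.1
      _ = ⨆ y, Q.mul (𝔇 V) (V.1 y) := Q.mul_iSup _ _
      _ ≤ ⨆ y, ⨆ W : {U : X → L // Q.IsDirClosed cl U}, Q.mul (𝔇 W) (W.1 y) :=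
          iSup_mono fun y => le_iSup (fun W : {U : X → L // Q.IsDirClosed cl U} =>
            Q.mul (𝔇 W) (W.1 y)) V
  · refine Q.le_subL fun y => ?_
    rw [Q.iSup_mul]
    refine iSup_le fun V => ?_
    rw [Q.mul_assoc]
    refine le_trans (Q.mul_le_mul le_rfl (Q.dc2_mul V.2 x y)) ?_
    exact le_iSup (fun W : {U : X → L // Q.IsDirClosed cl U} => Q.mul (𝔇 W) (W.1 y)) V
  · refine iSup_le fun V => ?_
    calc Q.mul (𝔇 V) (V.1 x)
        ≤ Q.mul (𝔇 V) (⨆ y, Q.mul (V.1 y) (cl (Q.ux y) x)) :=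
          Q.mul_le_mul le_rfl (V.2.2.2.1 x)
      _ = ⨆ y, Q.mul (𝔇 V) (Q.mul (V.1 y) (cl (Q.ux y) x)) := Q.mul_iSup _ _
      _ ≤ ⨆ y, Q.mul (⨆ W : {U : X → L // Q.IsDirClosed cl U}, Q.mul (𝔇 W) (W.1 y))
            (cl (Q.ux y) x) := by
          refine iSup_mono fun y => ?_
          rw [← Q.mul_assoc]
          exact Q.mul_le_mul (le_iSup (fun W : {U : X → L // Q.IsDirClosed cl U} =>
            Q.mul (𝔇 W) (W.1 y)) V) le_rfl
  · rw [Q.mul_iSup_iSup]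
    refine iSup_le fun U => iSup_le fun V => ?_
    have h1 : Q.mul (Q.mul (𝔇 U) (U.1 a)) (Q.mul (𝔇 V) (V.1 b))
        = Q.mul (Q.mul (Q.mul (𝔇 U) (𝔇 V)) (U.1 a)) (V.1 b) := by
      simp only [Q.mul_assoc, Q.mul_comm, Q.mul_left_comm]
    rw [h1]
    calc Q.mul (Q.mul (Q.mul (𝔇 U) (𝔇 V)) (U.1 a)) (V.1 b)
        ≤ Q.mul (Q.mul (⨆ W, Q.mul (Q.mul (𝔇 W) (Q.eeC cl U W)) (Q.eeC cl V W))
            (U.1 a)) (V.1 b) :=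
          Q.mul_le_mul (Q.mul_le_mul (h𝔇.2 U V) le_rfl) le_rfl
      _ = ⨆ W, Q.mul (Q.mul (Q.mul (Q.mul (𝔇 W) (Q.eeC cl U W)) (Q.eeC cl V W))
            (U.1 a)) (V.1 b) := by rw [Q.iSup_mul, Q.iSup_mul]
      _ ≤ ⨆ W : {U : X → L // Q.IsDirClosed cl U}, Q.mul (𝔇 W) (Q.mul (W.1 a) (W.1 b)) := by
          refine iSup_mono fun W => ?_
          have h2 : Q.mul (Q.mul (Q.mul (Q.mul (𝔇 W) (Q.eeC cl U W)) (Q.eeC cl V W))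
              (U.1 a)) (V.1 b)
              = Q.mul (𝔇 W) (Q.mul (Q.mul (Q.eeC cl U W) (U.1 a))
                (Q.mul (Q.eeC cl V W) (V.1 b))) := by
            simp only [Q.mul_assoc, Q.mul_comm, Q.mul_left_comm]
          rw [h2]
          exact Q.mul_le_mul le_rfl (Q.mul_le_mul (Q.subL_mul_le _ _ a) (Q.subL_mul_le _ _ b))
      _ ≤ _ := by
          refine iSup_le fun W => ?_
          calc Q.mul (𝔇 W) (Q.mul (W.1 a) (W.1 b))
              ≤ Q.mul (𝔇 W) (⨆ z, Q.mul (Q.mul (W.1 z) (cl (Q.ux z) a)) (cl (Q.ux z) b)) :=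
                Q.mul_le_mul le_rfl (W.2.2.2.2 a b)
            _ = ⨆ z, Q.mul (𝔇 W) (Q.mul (Q.mul (W.1 z) (cl (Q.ux z) a)) (cl (Q.ux z) b)) :=
                Q.mul_iSup _ _
            _ ≤ _ := by
                refine iSup_mono fun z => ?_
                have h3 : Q.mul (𝔇 W) (Q.mul (Q.mul (W.1 z) (cl (Q.ux z) a)) (cl (Q.ux z) b))
                    = Q.mul (Q.mul (Q.mul (𝔇 W) (W.1 z)) (cl (Q.ux z) a)) (cl (Q.ux z) b) := by
                  simp only [Q.mul_assoc, Q.mul_comm, Q.mul_left_comm]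
                rw [h3]
                refine Q.mul_le_mul (Q.mul_le_mul ?_ le_rfl) le_rfl
                exact le_iSup (fun W' : {U : X → L // Q.IsDirClosed cl U} =>
                  Q.mul (𝔇 W') (W'.1 z)) W

lemma supC_isSup :
    Q.IsSupL (Q.eeC cl) 𝔇 ⟨fun y => ⨆ V : {U : X → L // Q.IsDirClosed cl U},
      Q.mul (𝔇 V) (V.1 y), Q.supC_dirClosed h𝔇⟩ := by
  intro V
  apply le_antisymm
  · refine Q.le_subL fun U => ?_
    show Q.mul _ (𝔇 U) ≤ Q.eeC cl U V
    refine Q.le_subL fun x => ?_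
    rw [Q.mul_assoc]
    refine le_trans (Q.mul_le_mul le_rfl (le_iSup (fun W : {U : X → L // Q.IsDirClosed cl U}
      => Q.mul (𝔇 W) (W.1 x)) U)) ?_
    exact Q.subL_mul_le _ V.1 x
  · refine Q.le_subL fun x => ?_
    rw [Q.mul_iSup]
    refine iSup_le fun U => ?_
    rw [← Q.mul_assoc]
    refine le_trans (Q.mul_le_mul (Q.subL_mul_le _ _ U) le_rfl) ?_
    exact Q.subL_mul_le U.1 V.1 x

end SupC

lemma dcpoC : Q.IsDcpoL (Q.eeC cl) := fun 𝔇 h𝔇 => ⟨_, Q.supC_isSup h𝔇⟩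

end CommQuantale


namespace CommQuantale

variable {L : Type u} [CompleteLattice L] (Q : CommQuantale L)
variable {X : Type u} {cl : (X → L) → (X → L)}

section WayBelowC

variable (hgc : Q.IsGenClosure cl) (hit : Q.IsInterpolative cl)
include hgc hit

omit hgc hit in
/-- auxiliary: `sub(V, 𝔢x) ⊗ W(x) ≤ sub(V, W)` -/
lemma subL_ex_mul {V W : X → L} (hW : Q.IsDirClosed cl W) (x : X) :
    Q.mul (Q.subL V (cl (Q.ux x))) (W x) ≤ Q.subL V W := by
  refine Q.le_subL fun y => ?_
  have h1 : Q.mul (Q.mul (Q.subL V (cl (Q.ux x))) (W x)) (V y)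
      = Q.mul (Q.mul (Q.subL V (cl (Q.ux x))) (V y)) (W x) := Q.mul3_comm_right _ _ _
  rw [h1]
  calc Q.mul (Q.mul (Q.subL V (cl (Q.ux x))) (V y)) (W x)
      ≤ Q.mul (cl (Q.ux x) y) (W x) := Q.mul_le_mul (Q.subL_mul_le _ _ y) le_rfl
    _ = Q.mul (W x) (cl (Q.ux x) y) := Q.mul_comm _ _
    _ ≤ W y := Q.dc2_mul hW x y

/-- `𝔇₀` is a directed `L`-subset of `𝔠(X)`. -/
lemma D0_directed (U : {U : X → L // Q.IsDirClosed cl U}) :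
    Q.IsDirectedL (Q.eeC cl)
      (fun V => ⨆ x, Q.mul (U.1 x) (Q.subL V.1 (cl (Q.ux x)))) := by
  constructor
  · refine le_trans U.2.1 (iSup_le fun x => ?_)
    refine le_trans ?_ (le_iSup _ (⟨cl (Q.ux x), Q.ex_dirClosed hgc hit x⟩ :
      {U : X → L // Q.IsDirClosed cl U}))
    refine le_trans (Q.le_mul_right _ (Q.unit_le_subL_refl (cl (Q.ux x)))) ?_
    exact le_iSup (fun x' => Q.mul (U.1 x') (Q.subL (cl (Q.ux x)) (cl (Q.ux x')))) x
  · intro A B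
    rw [Q.mul_iSup_iSup]
    refine iSup_le fun x => iSup_le fun y => ?_
    have h1 : Q.mul (Q.mul (U.1 x) (Q.subL A.1 (cl (Q.ux x))))
        (Q.mul (U.1 y) (Q.subL B.1 (cl (Q.ux y))))
        = Q.mul (Q.mul (Q.mul (U.1 x) (U.1 y)) (Q.subL A.1 (cl (Q.ux x))))
          (Q.subL B.1 (cl (Q.ux y))) := by
      simp only [Q.mul_assoc, Q.mul_comm, Q.mul_left_comm]
    rw [h1]
    calc Q.mul (Q.mul (Q.mul (U.1 x) (U.1 y)) (Q.subL A.1 (cl (Q.ux x))))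
          (Q.subL B.1 (cl (Q.ux y)))
        ≤ Q.mul (Q.mul (⨆ z, Q.mul (Q.mul (U.1 z) (cl (Q.ux z) x)) (cl (Q.ux z) y))
            (Q.subL A.1 (cl (Q.ux x)))) (Q.subL B.1 (cl (Q.ux y))) :=
          Q.mul_le_mul (Q.mul_le_mul (U.2.2.2.2 x y) le_rfl) le_rfl
      _ = ⨆ z, Q.mul (Q.mul (Q.mul (Q.mul (U.1 z) (cl (Q.ux z) x)) (cl (Q.ux z) y))
            (Q.subL A.1 (cl (Q.ux x)))) (Q.subL B.1 (cl (Q.ux y))) := by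
          rw [Q.iSup_mul, Q.iSup_mul]
      _ ≤ _ := by
          refine iSup_le fun z => ?_
          have h2 : Q.mul (Q.mul (Q.mul (Q.mul (U.1 z) (cl (Q.ux z) x)) (cl (Q.ux z) y))
              (Q.subL A.1 (cl (Q.ux x)))) (Q.subL B.1 (cl (Q.ux y)))
              = Q.mul (U.1 z) (Q.mul
                (Q.mul (Q.subL A.1 (cl (Q.ux x))) (cl (Q.ux z) x))
                (Q.mul (Q.subL B.1 (cl (Q.ux y))) (cl (Q.ux z) y))) := by
            simp only [Q.mul_assoc, Q.mul_comm, Q.mul_left_comm]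
          rw [h2]
          have hdc2 : ∀ t : X, cl (Q.ux z) t ≤ Q.subL (cl (Q.ux t)) (cl (Q.ux z)) :=
            fun t => (Q.ex_dirClosed hgc hit z).2.1 t
          have key : ∀ (C : X → L) (t : X),
              Q.mul (Q.subL C (cl (Q.ux t))) (cl (Q.ux z) t) ≤ Q.subL C (cl (Q.ux z)) := by
            intro C t
            refine le_trans (Q.mul_le_mul le_rfl (hdc2 t)) ?_
            exact Q.subL_trans C (cl (Q.ux t)) (cl (Q.ux z))
          refine le_trans (Q.mul_le_mul le_rfl (Q.mul_le_mul (key A.1 x) (key B.1 y))) ?_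
          refine le_trans ?_ (le_iSup _ (⟨cl (Q.ux z), Q.ex_dirClosed hgc hit z⟩ :
            {U : X → L // Q.IsDirClosed cl U}))
          have h3 : Q.mul (U.1 z) (Q.mul (Q.subL A.1 (cl (Q.ux z))) (Q.subL B.1 (cl (Q.ux z))))
              = Q.mul (Q.mul (U.1 z) (Q.subL A.1 (cl (Q.ux z)))) (Q.subL B.1 (cl (Q.ux z))) :=
            (Q.mul_assoc _ _ _).symm
          rw [h3]
          refine Q.mul_le_mul (Q.mul_le_mul ?_ le_rfl) le_rfl
          refine le_trans (Q.le_mul_right _ (Q.unit_le_subL_refl (cl (Q.ux z)))) ?_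
          exact le_iSup (fun x' => Q.mul (U.1 x') (Q.subL (cl (Q.ux z)) (cl (Q.ux x')))) z

/-- `U` is the supremum of `𝔇₀`. -/
lemma D0_isSup (U : {U : X → L // Q.IsDirClosed cl U}) :
    Q.IsSupL (Q.eeC cl)
      (fun V => ⨆ x, Q.mul (U.1 x) (Q.subL V.1 (cl (Q.ux x)))) U := by
  have hsup := Q.supC_isSup (Q.D0_directed hgc hit U)
  have hdc := Q.supC_dirClosed (Q.D0_directed hgc hit U)
  have heq : (⟨fun y => ⨆ V : {U : X → L // Q.IsDirClosed cl U},
      Q.mul (⨆ x, Q.mul (U.1 x) (Q.subL V.1 (cl (Q.ux x)))) (V.1 y), hdc⟩ :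
      {U : X → L // Q.IsDirClosed cl U}) = U := by
    refine Subtype.ext (funext fun y => ?_)
    apply le_antisymm
    · refine iSup_le fun V => ?_
      rw [Q.iSup_mul]
      refine iSup_le fun x => ?_
      rw [Q.mul_assoc]
      refine le_trans (Q.mul_le_mul le_rfl (Q.subL_mul_le V.1 (cl (Q.ux x)) y)) ?_
      exact Q.dc2_mul U.2 x y
    · refine le_trans (U.2.2.2.1 y) (iSup_le fun x => ?_)
      refine le_trans ?_ (le_iSup _ (⟨cl (Q.ux x), Q.ex_dirClosed hgc hit x⟩ :
        {U : X → L // Q.IsDirClosed cl U}))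
      refine Q.mul_le_mul ?_ le_rfl
      refine le_trans (Q.le_mul_right _ (Q.unit_le_subL_refl (cl (Q.ux x)))) ?_
      exact le_iSup (fun x' => Q.mul (U.1 x') (Q.subL (cl (Q.ux x)) (cl (Q.ux x')))) x
  intro W
  conv_lhs => rw [← heq]
  exact hsup W

/-- In `𝔠(X)`, the way-below subset of `U` is exactly `𝔇₀`. -/
lemma wayBelowC_eq (U : {U : X → L // Q.IsDirClosed cl U}) :
    Q.wayBelow (Q.eeC cl) U =
      fun V => ⨆ x, Q.mul (U.1 x) (Q.subL V.1 (cl (Q.ux x))) := by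
  funext V
  apply le_antisymm
  · calc Q.wayBelow (Q.eeC cl) U V
        ≤ Q.mul (Q.wayBelow (Q.eeC cl) U V) (Q.eeC cl U U) :=
          Q.le_mul_right _ (Q.unit_le_subL_refl U.1)
      _ ≤ ⨆ W, Q.mul (⨆ x, Q.mul (U.1 x) (Q.subL W.1 (cl (Q.ux x)))) (Q.eeC cl V W) :=
          Q.wayBelow_mul_le (Q.D0_directed hgc hit U) (Q.D0_isSup hgc hit U) U V
      _ ≤ _ := by
          refine iSup_le fun W => ?_
          rw [Q.iSup_mul]
          refine iSup_le fun x => ?_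
          have h1 : Q.mul (Q.mul (U.1 x) (Q.subL W.1 (cl (Q.ux x)))) (Q.eeC cl V W)
              = Q.mul (U.1 x) (Q.mul (Q.subL V.1 W.1) (Q.subL W.1 (cl (Q.ux x)))) := by
            show _ = Q.mul (U.1 x) (Q.mul (Q.subL V.1 W.1) (Q.subL W.1 (cl (Q.ux x))))
            simp only [Q.mul_assoc, Q.mul_comm, Q.mul_left_comm, eeC]
          rw [h1]
          refine le_trans (Q.mul_le_mul le_rfl (Q.subL_trans V.1 W.1 (cl (Q.ux x)))) ?_
          exact le_iSup (fun x' => Q.mul (U.1 x') (Q.subL V.1 (cl (Q.ux x')))) x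
  · refine iSup_le fun x => ?_
    refine Q.le_wayBelow fun 𝔇 h𝔇 𝔖 h𝔖 => ?_
    have huniq : 𝔖 = ⟨fun y => ⨆ V : {U : X → L // Q.IsDirClosed cl U},
        Q.mul (𝔇 V) (V.1 y), Q.supC_dirClosed h𝔇⟩ :=
      Q.sup_unique (Q.eeC_order cl) h𝔖 (Q.supC_isSup h𝔇)
    have h1 : Q.mul (Q.mul (U.1 x) (Q.subL V.1 (cl (Q.ux x)))) (Q.eeC cl U 𝔖)
        = Q.mul (Q.mul (Q.subL U.1 𝔖.1) (U.1 x)) (Q.subL V.1 (cl (Q.ux x))) := by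
      show Q.mul (Q.mul (U.1 x) (Q.subL V.1 (cl (Q.ux x)))) (Q.subL U.1 𝔖.1) = _
      simp only [Q.mul_assoc, Q.mul_comm, Q.mul_left_comm]
    rw [h1]
    calc Q.mul (Q.mul (Q.subL U.1 𝔖.1) (U.1 x)) (Q.subL V.1 (cl (Q.ux x)))
        ≤ Q.mul (𝔖.1 x) (Q.subL V.1 (cl (Q.ux x))) :=
          Q.mul_le_mul (Q.subL_mul_le U.1 𝔖.1 x) le_rfl
      _ = Q.mul (⨆ W : {U : X → L // Q.IsDirClosed cl U}, Q.mul (𝔇 W) (W.1 x))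
            (Q.subL V.1 (cl (Q.ux x))) := by rw [huniq]
      _ = ⨆ W : {U : X → L // Q.IsDirClosed cl U},
            Q.mul (Q.mul (𝔇 W) (W.1 x)) (Q.subL V.1 (cl (Q.ux x))) := Q.iSup_mul _ _
      _ ≤ ⨆ W, Q.mul (𝔇 W) (Q.eeC cl V W) := by
          refine iSup_mono fun W => ?_
          have h2 : Q.mul (Q.mul (𝔇 W) (W.1 x)) (Q.subL V.1 (cl (Q.ux x)))
              = Q.mul (𝔇 W) (Q.mul (Q.subL V.1 (cl (Q.ux x))) (W.1 x)) := by
            simp only [Q.mul_assoc, Q.mul_comm, Q.mul_left_comm]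
          rw [h2]
          exact Q.mul_le_mul le_rfl (Q.subL_ex_mul W.2 x)

lemma continuousC : Q.IsContinuousLDcpo (Q.eeC cl) := by
  refine ⟨Q.eeC_order cl, Q.dcpoC, fun U => ?_⟩
  rw [Q.wayBelowC_eq hgc hit U]
  exact ⟨Q.D0_directed hgc hit U, Q.D0_isSup hgc hit U⟩

end WayBelowC

end CommQuantale


namespace CommQuantale

variable {L : Type u} [CompleteLattice L] (Q : CommQuantale L)

section Transfer

variable {P₁ P₂ : Type u} {e₁ : P₁ → P₁ → L} {e₂ : P₂ → P₂ → L} (g : P₁ ≃ P₂)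
variable (hg : ∀ x y, e₁ x y = e₂ (g x) (g y))
include hg

lemma transfer_directed {D : P₁ → L} (hD : Q.IsDirectedL e₁ D) :
    Q.IsDirectedL e₂ (fun x => D (g.symm x)) := by
  constructor
  · exact hD.1.trans (g.symm.surjective.iSup_comp D).ge
  · intro a b
    refine le_trans (hD.2 (g.symm a) (g.symm b)) ?_
    refine iSup_le fun z => ?_
    refine le_trans (le_of_eq ?_) (le_iSup
      (fun z₂ => Q.mul (Q.mul (D (g.symm z₂)) (e₂ a z₂)) (e₂ b z₂)) (g z))
    simp only [hg, Equiv.apply_symm_apply, Equiv.symm_apply_apply]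

lemma transfer_sup {D : P₁ → L} {s : P₁} (hs : Q.IsSupL e₁ D s) :
    Q.IsSupL e₂ (fun x => D (g.symm x)) (g s) := by
  intro y
  have h1 : e₂ (g s) y = e₁ s (g.symm y) := by
    rw [hg s (g.symm y), Equiv.apply_symm_apply]
  rw [h1, hs (g.symm y)]
  show (⨅ x, Q.res (D x) (e₁ x (g.symm y)))
      = ⨅ x₂, Q.res (D (g.symm x₂)) (e₂ x₂ y)
  rw [← g.surjective.iInf_comp (g := fun x₂ => Q.res (D (g.symm x₂)) (e₂ x₂ y))]
  refine iInf_congr fun x => ?_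
  rw [hg x (g.symm y), Equiv.symm_apply_apply, Equiv.apply_symm_apply]

lemma transfer_wayBelow (x y : P₁) :
    Q.wayBelow e₂ (g x) (g y) ≤ Q.wayBelow e₁ x y := by
  refine Q.le_wayBelow fun D hD s hs => ?_
  have key := Q.wayBelow_mul_le (Q.transfer_directed g hg hD) (Q.transfer_sup g hg hs)
    (g x) (g y)
  rw [hg x s]
  refine le_trans key ?_
  refine iSup_le fun d₂ => ?_
  refine le_trans (le_of_eq ?_) (le_iSup (fun d => Q.mul (D d) (e₁ y d)) (g.symm d₂))
  refine congrArg (Q.mul (D (g.symm d₂))) ?_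
  rw [hg y (g.symm d₂), Equiv.apply_symm_apply]

end Transfer

end CommQuantale


open CommQuantale in
/-- An L-ordered set (P,e) is a continuous L-dcpo iff there is an
interpolative generalized L-closure space (X, ⟨·⟩) with (𝔠(X), sub) ≅ (P, e). -/
theorem stmt10 {L P : Type u} [CompleteLattice L] (Q : CommQuantale L)
    (e : P → P → L) (hord : Q.IsLOrder e) :
    Q.IsContinuousLDcpo e ↔
      ∃ (X : Type u) (cl : (X → L) → (X → L)),
        Q.IsGenClosure cl ∧ Q.IsInterpolative cl ∧
        ∃ f : {U : X → L // Q.IsDirClosed cl U} ≃ P,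
          ∀ U V : {U : X → L // Q.IsDirClosed cl U},
            Q.subL U.1 V.1 = e (f U) (f V) := by
  constructor
  · intro hc
    refine ⟨P, Q.clP e, Q.clP_genClosure hc, Q.clP_interpolative hc, ?_⟩
    have he := hc.1
    have hdir : ∀ U : {U : P → L // Q.IsDirClosed (Q.clP e) U}, Q.IsDirectedL e U.1 :=
      fun U => Q.dirClosed_directed hc U.2
    let tf : {U : P → L // Q.IsDirClosed (Q.clP e) U} → P :=
      fun U => (hc.2.1 U.1 (hdir U)).choose
    have htf : ∀ U, Q.IsSupL e U.1 (tf U) := fun U => (hc.2.1 U.1 (hdir U)).choose_spec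
    refine ⟨⟨tf, fun x => ⟨Q.wayBelow e x, Q.wayBelow_dirClosed hc x⟩, ?_, ?_⟩, ?_⟩
    · intro U
      exact Subtype.ext (Q.dirClosed_wayBelow_sup hc U.2 (htf U))
    · intro x
      exact Q.sup_unique he (htf _) ((hc.2.2 x).2)
    · intro U V
      exact Q.dirClosed_subL_eq hc V.2 U.2 (htf U) (htf V)
  · rintro ⟨X, cl, hgc, hit, f, hf⟩
    have hcont := Q.continuousC hgc hit
    have hg : ∀ U V, Q.eeC cl U V = e (f U) (f V) := hf
    have hg' : ∀ x y, e x y = Q.eeC cl (f.symm x) (f.symm y) := by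
      intro x y
      rw [hg (f.symm x) (f.symm y), Equiv.apply_symm_apply, Equiv.apply_symm_apply]
    refine ⟨hord, ?_, ?_⟩
    · intro D hD
      have hD2 := Q.transfer_directed f.symm hg' hD
      have hD2' : Q.IsDirectedL (Q.eeC cl) (fun x => D (f x)) := by
        simpa using hD2
      obtain ⟨s, hs⟩ := Q.dcpoC _ hD2'
      refine ⟨f s, ?_⟩
      have hs2 := Q.transfer_sup f hg hs
      have hDD : (fun x => D (f (f.symm x))) = D :=
        funext fun x => by rw [f.apply_symm_apply]
      rwa [hDD] at hs2
    · intro x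
      have hxy : ∀ y, Q.wayBelow e x y = Q.wayBelow (Q.eeC cl) (f.symm x) (f.symm y) := by
        intro y
        apply le_antisymm
        · have h := Q.transfer_wayBelow f hg (f.symm x) (f.symm y)
          simpa using h
        · exact Q.transfer_wayBelow f.symm hg' x y
      have hwx : Q.wayBelow e x = fun y => Q.wayBelow (Q.eeC cl) (f.symm x) (f.symm y) :=
        funext hxy
      constructor
      · rw [hwx]
        exact Q.transfer_directed f hg (hcont.2.2 (f.symm x)).1
      · rw [hwx]
        have h2 := Q.transfer_sup f hg (hcont.2.2 (f.symm x)).2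
        rwa [f.apply_symm_apply] at h2
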